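/- arXiv:1712.06901 — 2 statements merged into one kernel-verified Lean document; each statement's English description precedes it below -/
import Mathlib

section
/- Let Y be a functional extension of X. Then for every ξ ∈ Y, the family U_ξ = {A ⊆ X : ξ ∈ *A} is an ultrafilter on X, and for every function f : X → X one has U_{f*(ξ)} = Ultrafilter.map f (U_ξ), i.e. A ∈ U_{f*(ξ)} if and only if f⁻¹(A) ∈ U_ξ. -/
attribute [local instance] Classical.propDecidable

/-- A functional extension of `X`: a proper superset `Y ⊇ X` (given via an injective,
non-surjective inclusion) with two designated distinct elements `0, 1 ∈ X`, together with
a distinguished extension `star f : Y → Y` of every `f : X → X`, preserving compositions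
and equalizers, and with directed Puritz preorder. -/
structure FunctionalExtension (X Y : Type*) where
  zero : X
  one : X
  zero_ne_one : zero ≠ one
  incl : X → Y
  incl_injective : Function.Injective incl
  proper : ¬ Function.Surjective incl
  star : (X → X) → Y → Y
  star_incl : ∀ (f : X → X) (x : X), star f (incl x) = incl (f x)
  comp : ∀ f g : X → X, star (g ∘ f) = star g ∘ star f
  equ : ∀ f g : X → X,
    star (fun x => if f x = g x then one else zero) =
      fun ξ => if star f ξ = star g ξ then incl one else incl zero
  dir : ∀ ξ η : Y, ∃ (p₁ p₂ : X → X) (ζ : Y), star p₁ ζ = ξ ∧ star p₂ ζ = η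

namespace FunctionalExtension

variable {X Y : Type*}

/-- The star-extension `*A ⊆ Y` of a subset `A ⊆ X`:
the set where the extension of the characteristic function of `A` takes the value `1`. -/
def sets (E : FunctionalExtension X Y) (A : Set X) : Set Y :=
  {ξ | E.star (fun x => if x ∈ A then E.one else E.zero) ξ = E.incl E.one}

/-- The S-topology on `Y`: the topology with basis `{*A : A ⊆ X}`. -/
def sTopology (E : FunctionalExtension X Y) : TopologicalSpace Y :=
  TopologicalSpace.generateFrom (Set.range E.sets)

end FunctionalExtension

namespace FunctionalExtension

variable {X Y : Type*}

variable (E : FunctionalExtension X Y)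

/-- The characteristic function of `A`. -/
noncomputable def chi (A : Set X) : X → X := fun x => if x ∈ A then E.one else E.zero

lemma chi_pos {A : Set X} {x : X} (h : x ∈ A) : E.chi A x = E.one := if_pos h

lemma chi_neg {A : Set X} {x : X} (h : x ∉ A) : E.chi A x = E.zero := if_neg h

lemma mem_sets {A : Set X} {ξ : Y} : ξ ∈ E.sets A ↔ E.star (E.chi A) ξ = E.incl E.one :=
  Iff.rfl

lemma star_const_one : E.star (fun _ => E.one) = fun _ => E.incl E.one := by
  have h := E.equ id id
  have h1 : (fun x : X => if id x = id x then E.one else E.zero) = fun _ => E.one := by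
    funext x; exact if_pos rfl
  have h2 : (fun ξ => if E.star id ξ = E.star id ξ then E.incl E.one else E.incl E.zero)
      = fun _ => E.incl E.one := by funext ξ; exact if_pos rfl
  rw [h1, h2] at h; exact h

lemma star_const (c : X) : E.star (fun _ => c) = fun _ => E.incl c := by
  funext ξ
  have h : (fun _ => c : X → X) = (fun _ => c) ∘ (fun _ => E.one) := rfl
  rw [h, E.comp]
  simp only [Function.comp_apply]
  rw [congrFun E.star_const_one ξ, E.star_incl]

lemma star_id_aux (f : X → X) (ξ : Y) : E.star f (E.star id ξ) = E.star f ξ := by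
  have h := congrFun (E.comp id f) ξ
  rw [Function.comp_id] at h
  exact h.symm

lemma mem_sets_eq (f g : X → X) (ξ : Y) :
    ξ ∈ E.sets {x | f x = g x} ↔ E.star f ξ = E.star g ξ := by
  have hχ : E.chi {x | f x = g x} = fun x => if f x = g x then E.one else E.zero := by
    funext x
    simp only [chi, Set.mem_setOf_eq]
  rw [E.mem_sets, hχ, E.equ f g]
  by_cases h : E.star f ξ = E.star g ξ
  · simp [h]
  · simp only [if_neg h]
    constructor
    · intro h01; exact absurd (E.incl_injective h01).symm E.zero_ne_one.symm
    · intro h'; exact absurd h' h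

lemma two_valued (A : Set X) (ξ : Y) :
    E.star (E.chi A) ξ = E.incl E.one ∨ E.star (E.chi A) ξ = E.incl E.zero := by
  have h1 : (fun x : X => if E.chi A x = (fun _ => E.one) x then E.one else E.zero)
      = E.chi A := by
    funext x
    by_cases h : x ∈ A
    · rw [E.chi_pos h]; exact if_pos rfl
    · rw [E.chi_neg h]; exact if_neg E.zero_ne_one
  have h2 := E.equ (E.chi A) (fun _ => E.one)
  rw [h1, E.star_const_one] at h2
  have h3 := congrFun h2 ξ
  by_cases h : E.star (E.chi A) ξ = E.incl E.one
  · exact Or.inl h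
  · right
    rw [h3]
    exact if_neg h

lemma mem_sets_univ (ξ : Y) : ξ ∈ E.sets (Set.univ : Set X) := by
  rw [E.mem_sets]
  have h : E.chi (Set.univ : Set X) = fun _ => E.one := by
    funext x; exact if_pos (Set.mem_univ x)
  rw [h, E.star_const_one]

lemma notMem_sets_empty (ξ : Y) : ξ ∉ E.sets (∅ : Set X) := by
  rw [E.mem_sets]
  have h : E.chi (∅ : Set X) = fun _ => E.zero := by
    funext x; exact if_neg (Set.notMem_empty x)
  rw [h, E.star_const]
  intro h'
  exact E.zero_ne_one (E.incl_injective h')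

lemma mem_sets_preimage (f : X → X) (A : Set X) (ξ : Y) :
    ξ ∈ E.sets (f ⁻¹' A) ↔ E.star f ξ ∈ E.sets A := by
  have h : E.chi (f ⁻¹' A) = E.chi A ∘ f := by
    funext x
    by_cases hm : f x ∈ A
    · rw [Function.comp_apply, E.chi_pos hm, E.chi_pos (Set.mem_preimage.mpr hm)]
    · rw [Function.comp_apply, E.chi_neg hm,
        E.chi_neg (fun hc => hm (Set.mem_preimage.mp hc))]
  rw [E.mem_sets, E.mem_sets, h, E.comp, Function.comp_apply]

lemma mem_sets_compl (A : Set X) (ξ : Y) : ξ ∈ E.sets Aᶜ ↔ ξ ∉ E.sets A := by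
  have hset : {x | E.chi A x = (fun _ => E.zero) x} = Aᶜ := by
    ext x
    simp only [Set.mem_setOf_eq, Set.mem_compl_iff]
    by_cases h : x ∈ A
    · rw [E.chi_pos h]
      exact ⟨fun h10 => absurd h10.symm E.zero_ne_one, fun h' => absurd h h'⟩
    · rw [E.chi_neg h]
      exact ⟨fun _ => h, fun _ => rfl⟩
  have := E.mem_sets_eq (E.chi A) (fun _ => E.zero) ξ
  rw [hset, E.star_const] at this
  rw [this, E.mem_sets]
  rcases E.two_valued A ξ with h | h
  · rw [h]
    exact ⟨fun h10 => absurd (E.incl_injective h10) E.zero_ne_one.symm,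
      fun h' => absurd rfl h'⟩
  · rw [h]
    exact ⟨fun _ h10 => E.zero_ne_one (E.incl_injective h10), fun _ => rfl⟩

lemma sets_mono {A C : Set X} (hAC : A ⊆ C) {ξ : Y} (hξ : ξ ∈ E.sets A) :
    ξ ∈ E.sets C := by
  rcases Set.eq_empty_or_nonempty A with rfl | ⟨a₀, ha₀⟩
  · exact absurd hξ (E.notMem_sets_empty ξ)
  set h : X → X := fun x => if x ∈ A then x else a₀ with hh
  have heq : {x | h x = id x} = A := by
    ext x
    simp only [Set.mem_setOf_eq, id_eq, hh]
    constructor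
    · intro hx
      by_cases hm : x ∈ A
      · exact hm
      · rw [if_neg hm] at hx; rw [← hx]; exact ha₀
    · intro hm; exact if_pos hm
  have h1 : E.star h ξ = E.star id ξ := by
    rw [← E.mem_sets_eq h id ξ, heq]; exact hξ
  have h2 : E.chi C ∘ h = fun _ => E.one := by
    funext x
    simp only [Function.comp_apply, hh]
    by_cases hm : x ∈ A
    · rw [if_pos hm]; exact E.chi_pos (hAC hm)
    · rw [if_neg hm]; exact E.chi_pos (hAC ha₀)
  have h3 := congrFun (E.comp h (E.chi C)) ξ
  rw [h2, E.star_const_one] at h3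
  rw [E.mem_sets]
  rw [← E.star_id_aux (E.chi C) ξ, ← h1]
  exact h3.symm

lemma sets_inter {A B : Set X} {ξ : Y} (hA : ξ ∈ E.sets A) (hB : ξ ∈ E.sets B) :
    ξ ∈ E.sets (A ∩ B) := by
  by_cases hBu : B = Set.univ
  · rw [hBu, Set.inter_univ]; exact hA
  obtain ⟨z₀, hz₀⟩ : ∃ z, z ∉ B := by
    by_contra hc; push_neg at hc; exact hBu (Set.eq_univ_of_forall hc)
  set h : X → X := fun x => if x ∈ A then x else z₀ with hh
  have hpre : h ⁻¹' B = A ∩ B := by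
    ext x
    simp only [Set.mem_preimage, Set.mem_inter_iff, hh]
    by_cases hm : x ∈ A
    · rw [if_pos hm]; exact ⟨fun hx => ⟨hm, hx⟩, fun hx => hx.2⟩
    · rw [if_neg hm]
      exact ⟨fun hx => absurd hx hz₀, fun hx => absurd hx.1 hm⟩
  have heq : {x | h x = id x} = A ∪ {z₀} := by
    ext x
    simp only [Set.mem_setOf_eq, id_eq, hh, Set.mem_union, Set.mem_singleton_iff]
    by_cases hm : x ∈ A
    · rw [if_pos hm]; exact ⟨fun _ => Or.inl hm, fun _ => rfl⟩
    · rw [if_neg hm]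
      constructor
      · intro hx; exact Or.inr hx.symm
      · rintro (hx | hx)
        · exact absurd hx hm
        · exact hx.symm
  have hAsub : ξ ∈ E.sets (A ∪ {z₀}) := E.sets_mono Set.subset_union_left hA
  have h1 : E.star h ξ = E.star id ξ := by
    rw [← E.mem_sets_eq h id ξ, heq]; exact hAsub
  rw [← hpre, E.mem_sets_preimage, h1, E.mem_sets, E.star_id_aux]
  exact hB

end FunctionalExtension

/-- For every `ξ ∈ Y`, the family `U_ξ = {A ⊆ X : ξ ∈ *A}` is an ultrafilter on `X`,
and for every `f : X → X` one has `U_{f*(ξ)} = Ultrafilter.map f (U_ξ)`, i.e.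
`A ∈ U_{f*(ξ)} ↔ f⁻¹(A) ∈ U_ξ`. -/
theorem stmt5 {X Y : Type*} (E : FunctionalExtension X Y) (ξ : Y) :
    ∃ U : Ultrafilter X,
      (∀ A : Set X, A ∈ U ↔ ξ ∈ E.sets A) ∧
      (∀ (f : X → X) (A : Set X),
        (E.star f ξ ∈ E.sets A ↔ A ∈ Ultrafilter.map f U)) := by
  let F : Filter X :=
    { sets := {A | ξ ∈ E.sets A}
      univ_sets := E.mem_sets_univ ξ
      sets_of_superset := fun hA hAB => E.sets_mono hAB hA
      inter_sets := fun hA hB => E.sets_inter hA hB }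
  have hmemF : ∀ A : Set X, A ∈ F ↔ ξ ∈ E.sets A := fun A => Iff.rfl
  have hcompl : ∀ s : Set X, sᶜ ∉ F ↔ s ∈ F := fun s => by
    rw [hmemF, hmemF, E.mem_sets_compl]
    exact not_not
  refine ⟨Ultrafilter.ofComplNotMemIff F hcompl, fun A => Iff.rfl, fun f A => ?_⟩
  rw [Ultrafilter.mem_map]
  show E.star f ξ ∈ E.sets A ↔ f ⁻¹' A ∈ F
  rw [hmemF, E.mem_sets_preimage]
end

section
/- Let Y be a functional extension of X. Then Y satisfies the principle Poss (for every family F of subsets of X with the finite intersection property, ⋂_{A ∈ F} *A ≠ ∅) if and only if every ultrafilter V on X is realized by some point of Y, i.e. for every ultrafilter V on X there exists ξ ∈ Y with U_ξ = V, where U_ξ = {A ⊆ X : ξ ∈ *A}. -/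
attribute [local instance] Classical.propDecidable

section Aux

variable {X Y : Type*} (E : FunctionalExtension X Y)

private lemma star_const (c : X) (ξ : Y) : E.star (fun _ => c) ξ = E.incl c := by
  obtain ⟨p₁, p₂, ζ, h₁, h₂⟩ := E.dir ξ (E.incl E.zero)
  have e₁ : ((fun _ => c) ∘ p₁ : X → X) = fun _ => c := rfl
  have e₂ : ((fun _ => c) ∘ p₂ : X → X) = fun _ => c := rfl
  have k1 : E.star (fun _ => c) ξ = E.star (fun _ => c) ζ := by
    rw [← h₁, ← Function.comp_apply (f := E.star (fun _ => c)), ← E.comp, e₁]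
  have k2 : E.star (fun _ => c) (E.incl E.zero) = E.star (fun _ => c) ζ := by
    rw [← h₂, ← Function.comp_apply (f := E.star (fun _ => c)), ← E.comp, e₂]
  rw [k1, ← k2, E.star_incl]

private lemma mem_compl_iff (A : Set X) (ξ : Y) :
    ξ ∈ E.sets Aᶜ ↔
      E.star (fun x => if x ∈ A then E.one else E.zero) ξ = E.incl E.zero := by
  set f : X → X := fun x => if x ∈ A then E.one else E.zero with hf
  have hfun : (fun x => if f x = (fun _ => E.zero) x then E.one else E.zero)
      = fun x => @ite X (x ∈ Aᶜ) (Classical.propDecidable _) E.one E.zero := by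
    funext x
    by_cases hx : x ∈ A <;>
      simp [hf, hx, E.zero_ne_one, E.zero_ne_one.symm]
  have h := E.equ f (fun _ => E.zero)
  rw [hfun] at h
  have h' := congrFun h ξ
  rw [star_const] at h'
  constructor
  · intro hm
    simp only [FunctionalExtension.sets, Set.mem_setOf_eq] at hm
    have hm2 : (if E.star f ξ = E.incl E.zero then E.incl E.one else E.incl E.zero)
        = E.incl E.one := h'.symm.trans hm
    by_contra hc
    rw [if_neg hc] at hm2
    exact E.zero_ne_one (E.incl_injective hm2)
  · intro hz
    simp only [FunctionalExtension.sets, Set.mem_setOf_eq]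
    exact h'.trans (if_pos hz)

private lemma not_both (A : Set X) (ξ : Y) (h1 : ξ ∈ E.sets A) (h2 : ξ ∈ E.sets Aᶜ) :
    False := by
  rw [mem_compl_iff] at h2
  simp only [FunctionalExtension.sets, Set.mem_setOf_eq] at h1
  exact E.zero_ne_one (E.incl_injective (h2.symm.trans h1))

end Aux

/-- A functional extension satisfies the principle Poss if and only if every ultrafilter
`V` on `X` is realized by some point of `Y`, i.e. `V = U_ξ = {A ⊆ X : ξ ∈ *A}` for
some `ξ ∈ Y`. -/
theorem stmt10 {X Y : Type*} (E : FunctionalExtension X Y) :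
    (∀ F : Set (Set X), (∀ G ⊆ F, G.Finite → (⋂₀ G).Nonempty) →
      (⋂ A ∈ F, E.sets A).Nonempty) ↔
    (∀ V : Ultrafilter X, ∃ ξ : Y, ∀ A : Set X, A ∈ V ↔ ξ ∈ E.sets A) := by
  constructor
  · intro h V
    obtain ⟨ξ, hξ⟩ := h V.sets (fun G hG hGfin => by
      have hmem : ⋂₀ G ∈ V := (Filter.sInter_mem hGfin).2 (fun s hs => hG hs)
      exact V.nonempty_of_mem hmem)
    refine ⟨ξ, fun A => ⟨fun hA => ?_, fun hA => ?_⟩⟩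
    · exact Set.mem_iInter₂.1 hξ A hA
    · by_contra hA'
      have hc : Aᶜ ∈ V := Ultrafilter.compl_mem_iff_notMem.2 hA'
      exact not_both E A ξ hA (Set.mem_iInter₂.1 hξ Aᶜ hc)
  · intro h F hF
    obtain ⟨V, hV⟩ := Ultrafilter.exists_ultrafilter_of_finite_inter_nonempty F
      (fun T hT => hF ↑T hT T.finite_toSet)
    obtain ⟨ξ, hξ⟩ := h V
    exact ⟨ξ, Set.mem_iInter₂.2 fun A hA => (hξ A).1 (hV hA)⟩
end
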